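/- For any object A in a convenient addition category A, the decomposition category Decomp_A is a poset: if there is a morphism {B₁,…,B_m} → {A₁,…,A_n} in Decomp_A, then for each i there is a unique j such that there exists a monomorphism A_i → B_j, so the defining function f : {1,…,n} → {1,…,m} is unique. -/
import Mathlib


open CategoryTheory MonoidalCategory Limits

universe u v

class ConvenientAdditionCategory (A : Type u) [Category.{v} A] [MonoidalCategory A]
    [SymmetricCategory A] where
  isInitialUnit : IsInitial (𝟙_ A)
  allMono : ∀ {X Y : A} (f : X ⟶ Y), Mono f
  ca2 : ∀ {X Y Z : A} (u v : X ⊗ Y ⟶ Z),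
    ((ρ_ X).inv ≫ (X ◁ isInitialUnit.to Y) ≫ u = (ρ_ X).inv ≫ (X ◁ isInitialUnit.to Y) ≫ v) →
    ((λ_ Y).inv ≫ (isInitialUnit.to X ▷ Y) ≫ u = (λ_ Y).inv ≫ (isInitialUnit.to X ▷ Y) ≫ v) →
    u = v
  ca3 : ∀ (X Y : A),
    IsPullback (isInitialUnit.to X) (isInitialUnit.to Y)
      ((ρ_ X).inv ≫ (X ◁ isInitialUnit.to Y)) ((λ_ Y).inv ≫ (isInitialUnit.to X ▷ Y))

namespace ConvenientAdditionCategory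

variable {A : Type u} [Category.{v} A] [MonoidalCategory A] [SymmetricCategory A]
  [ConvenientAdditionCategory A]

noncomputable def incl (X Y : A) : X ⟶ X ⊗ Y :=
  (ρ_ X).inv ≫ (X ◁ isInitialUnit.to Y)

noncomputable def incr (X Y : A) : Y ⟶ X ⊗ Y :=
  (λ_ Y).inv ≫ (isInitialUnit.to X ▷ Y)

variable (T : A)

/-- The bottom subobject of `T`: the image of the initial object. -/
noncomputable def botSub : Subobject T :=
  haveI : Mono (isInitialUnit.to T) := allMono _
  Subobject.mk (isInitialUnit.to T)

variable {T}

/-- `PairSum P Q R` says that the internal (sub-object) sum `P ∔ Q` is defined and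
equals `R`: there is a monomorphism `P ⊗ Q ⟶ T` restricting to `P` and `Q` along the
canonical inclusions, whose image is `R`. -/
noncomputable def PairSum (P Q R : Subobject T) : Prop :=
  ∃ i : ((P : A) ⊗ (Q : A)) ⟶ T,
    incl (P : A) (Q : A) ≫ i = P.arrow ∧
    incr (P : A) (Q : A) ≫ i = Q.arrow ∧
    (haveI : Mono i := allMono i
     Subobject.mk i = R)

/-- `SumsTo s R`: the finite collection `s` of subobjects of `T` has a defined
internal sum equal to `R`. -/
inductive SumsTo : Multiset (Subobject T) → Subobject T → Prop
  | nil : SumsTo 0 (botSub T)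
  | cons {s : Multiset (Subobject T)} {R P Q : Subobject T} :
      SumsTo s R → PairSum P R Q → SumsTo (P ::ₘ s) Q

end ConvenientAdditionCategory

/-!
STATEMENT 10: The decomposition category Decomp_A is a poset: if
f, f' : {1,…,n} → {1,…,m} both exhibit a morphism {B₁,…,B_m} ⟶ {A₁,…,A_n} in
Decomp_A (i.e. ∔_{i ∈ f⁻¹(j)} A_i = B_j for all j), then each A_i admits a
monomorphism into a *unique* B_j, and consequently f = f'.
-/

namespace ConvenientAdditionCategory

variable {A : Type u} [Category.{v} A] [MonoidalCategory A] [SymmetricCategory A]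
  [ConvenientAdditionCategory A] {T : A}

lemma aux_bot_le (X : Subobject T) : botSub T ≤ X := by
  haveI : Mono (isInitialUnit.to T) := allMono _
  exact Subobject.mk_le_of_comm (isInitialUnit.to (X : A)) (isInitialUnit.hom_ext _ _)

lemma aux_pairSum_le {P R Q : Subobject T} (h : PairSum P R Q) : P ≤ Q ∧ R ≤ Q := by
  obtain ⟨i, h1, h2, h3⟩ := h
  haveI : Mono i := allMono i
  subst h3
  exact ⟨Subobject.le_mk_of_comm (incl _ _) h1, Subobject.le_mk_of_comm (incr _ _) h2⟩

lemma aux_pairSum_disj {P R Q : Subobject T} (h : PairSum P R Q) {X : Subobject T}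
    (h1 : X ≤ P) (h2 : X ≤ R) : X = botSub T := by
  obtain ⟨i, hl, hr, -⟩ := h
  haveI : Mono i := allMono i
  set u := Subobject.ofLE X P h1 with hu
  set v := Subobject.ofLE X R h2 with hv
  have comm : u ≫ incl (P : A) (R : A) = v ≫ incr (P : A) (R : A) := by
    rw [← cancel_mono i]
    simp only [Category.assoc, hl, hr]
    simp only [hu, hv, Subobject.ofLE_arrow]
  set w := (ca3 (P : A) (R : A)).lift u v comm with hw
  have hwP : w ≫ isInitialUnit.to (P : A) = u := (ca3 (P : A) (R : A)).lift_fst u v comm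
  have hXbot : X ≤ botSub T := by
    haveI : Mono (isInitialUnit.to T) := allMono _
    refine Subobject.le_mk_of_comm w ?_
    have : isInitialUnit.to T = isInitialUnit.to (P : A) ≫ P.arrow :=
      isInitialUnit.hom_ext _ _
    rw [this, ← Category.assoc, hwP, Subobject.ofLE_arrow]
  exact le_antisymm hXbot (aux_bot_le X)

lemma aux_sumsTo_le {s : Multiset (Subobject T)} {R : Subobject T} (h : SumsTo s R) :
    ∀ P ∈ s, P ≤ R := by
  induction h with
  | nil => intro P hP; simp at hP
  | @cons s R P Q hs hp ih =>
    intro P' hP'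
    rcases Multiset.mem_cons.mp hP' with h | h
    · exact h ▸ (aux_pairSum_le hp).1
    · exact (ih P' h).trans (aux_pairSum_le hp).2

lemma aux_sumsTo_disj {s : Multiset (Subobject T)} {R : Subobject T} (h : SumsTo s R) :
    ∀ P Q, P ∈ s → Q ∈ s → P ≠ Q → ∀ X : Subobject T, X ≤ P → X ≤ Q → X = botSub T := by
  induction h with
  | nil => intro P Q hP; simp at hP
  | @cons s R P Q hs hp ih =>
    intro P' Q' hP' hQ' hne X hXP hXQ
    rcases Multiset.mem_cons.mp hP' with h | h
    · rcases Multiset.mem_cons.mp hQ' with h' | h'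
      · exact absurd (h.trans h'.symm) hne
      · exact aux_pairSum_disj hp (h ▸ hXP) (hXQ.trans (aux_sumsTo_le hs Q' h'))
    · rcases Multiset.mem_cons.mp hQ' with h' | h'
      · exact aux_pairSum_disj hp (h' ▸ hXQ) (hXP.trans (aux_sumsTo_le hs P' h))
      · exact ih P' Q' h h' hne X hXP hXQ

end ConvenientAdditionCategory

open ConvenientAdditionCategory in
theorem statement10 {A : Type u} [Category.{v} A] [MonoidalCategory A]
    [SymmetricCategory A] [ConvenientAdditionCategory A]
    {T : A} {n m : ℕ}
    -- the decomposition {A₁,…,A_n} of T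
    (a : Fin n → Subobject T) (ha : Function.Injective a)
    (habot : ∀ i, a i ≠ botSub T)
    (hasum : SumsTo (Multiset.map a Finset.univ.val) (⊤ : Subobject T))
    -- the decomposition {B₁,…,B_m} of T
    (b : Fin m → Subobject T) (hb : Function.Injective b)
    (hbbot : ∀ j, b j ≠ botSub T)
    (hbsum : SumsTo (Multiset.map b Finset.univ.val) (⊤ : Subobject T))
    -- two functions each defining a morphism {B₁,…,B_m} ⟶ {A₁,…,A_n} in Decomp_T
    (f f' : Fin n → Fin m)
    (hf : ∀ j : Fin m,
      SumsTo (Multiset.map a (Finset.univ.filter (fun i => f i = j)).val) (b j))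
    (hf' : ∀ j : Fin m,
      SumsTo (Multiset.map a (Finset.univ.filter (fun i => f' i = j)).val) (b j)) :
    -- each A_i admits a monomorphism into a unique B_j (monomorphisms into T over T
    -- correspond to the order relation on subobjects), and the function f is unique:
    (∀ i : Fin n, ∃! j : Fin m, a i ≤ b j) ∧ f = f' := by
  have memb : ∀ j : Fin m, b j ∈ Multiset.map b Finset.univ.val :=
    fun j => Multiset.mem_map.mpr ⟨j, Finset.mem_univ j, rfl⟩
  have le_of : ∀ (g : Fin n → Fin m),
      (∀ j : Fin m,
        SumsTo (Multiset.map a (Finset.univ.filter (fun i => g i = j)).val) (b j)) →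
      ∀ i, a i ≤ b (g i) := by
    intro g hg i
    refine aux_sumsTo_le (hg (g i)) (a i) ?_
    exact Multiset.mem_map.mpr ⟨i, by simp, rfl⟩
  have uniq : ∀ i (j : Fin m), a i ≤ b j → j = f i := by
    intro i j hij
    by_contra hne
    have hbne : b j ≠ b (f i) := fun h => hne (hb h)
    exact habot i (aux_sumsTo_disj hbsum (b j) (b (f i)) (memb j) (memb (f i)) hbne
      (a i) hij (le_of f hf i))
  constructor
  · intro i
    exact ⟨f i, le_of f hf i, fun j hj => uniq i j hj⟩
  · funext i
    exact (uniq i (f' i) (le_of f' hf' i)).symm
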